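/- Let k ≥ 2 and consider the graph of Proposition on MMS non-existence: k guard agents forming a clique and k+1 standard agents each adjacent to all guards, with binary utilities. The balanced k-partition with parts π_j = {a_j, i_j} for j ∈ [2,k] and π₁ = {a₁, i₁, i_{k+1}} (each part containing exactly one guard) is EF1. -/

import Mathlib

open Finset

variable {V : Type*} [Fintype V] [DecidableEq V]

/-- The `i`-th part of the `k`-partition given by `π`. -/
def cell {k : ℕ} (π : V → Fin k) (i : Fin k) : Finset V :=
  Finset.univ.filter fun v => π v = i

/-- A `k`-partition is balanced if every part has size `⌊n/k⌋` or `⌈n/k⌉`. -/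
def IsBalanced {k : ℕ} (π : V → Fin k) : Prop :=
  ∀ i : Fin k, Fintype.card V / k ≤ (cell π i).card ∧
    (cell π i).card ≤ (Fintype.card V + k - 1) / k

/-- Binary utility: the number of friends (neighbors) of `a` in `S`. -/
def butil (G : SimpleGraph V) [DecidableRel G.Adj] (a : V) (S : Finset V) : ℕ :=
  (S.filter fun b => G.Adj a b).card

/-- The maximin share of agent `a`: the largest `m` such that some balanced
`k`-partition gives `a` at least `m` friends in every part. -/
noncomputable def mmsShare (G : SimpleGraph V) [DecidableRel G.Adj] (k : ℕ) (a : V) : ℕ :=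
  sSup {m : ℕ | ∃ π : V → Fin k, IsBalanced π ∧ ∀ i : Fin k, m ≤ butil G a (cell π i)}

/-- Guards are the first `k` vertices (forming a clique); standards are the remaining
`k+1` vertices (an independent set); every guard is adjacent to every standard. -/
def guardGraph (k : ℕ) : SimpleGraph (Fin (2 * k + 1)) where
  Adj u v := u ≠ v ∧ (u.val < k ∨ v.val < k)
  symm := ⟨fun u v h => ⟨h.1.symm, h.2.symm⟩⟩
  loopless := ⟨fun u h => h.1 rfl⟩

instance (k : ℕ) : DecidableRel (guardGraph k).Adj :=
  fun u v => inferInstanceAs (Decidable (u ≠ v ∧ (u.val < k ∨ v.val < k)))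

/-- The partition with parts `π_j = {a_j, i_j}` for `j ∈ [2, k]` and
`π₁ = {a₁, i₁, i_{k+1}}`: guard `j` (index `j - 1`) together with standard `j`
(index `k + j - 1`) form part `j - 1`, and the last standard joins part `0`. -/
def guardPartition (k : ℕ) (hk : 0 < k) (v : Fin (2 * k + 1)) : Fin k :=
  if h : v.val < k then ⟨v.val, h⟩
  else if h2 : v.val < 2 * k then ⟨v.val - k, by omega⟩
  else ⟨0, hk⟩

/-! Every part consists of one guard, the standard paired with it and, for the first part, the
last standard: so all parts have two or three agents, which for `n = 2k + 1` is balanced. Each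
agent has a friend in its own part (a guard its standard, a standard its guard), while removing
`b` and one more good from any part leaves at most one good: this is EF1. -/

section PartsOfTwoOrThree

variable {k : ℕ} (π : V → Fin k)

omit [DecidableEq V] in
theorem isBalanced_of_card_cell_mem_Icc (hk : 2 ≤ k) (hV : Fintype.card V = 2 * k + 1)
    (hcell : ∀ i, #(cell π i) ∈ Icc 2 3) : IsBalanced π := by
  intro i
  have hlow : (2 * k + 1) / k = 2 := Nat.div_eq_of_lt_le (by omega) (by omega)
  have hup : (2 * k + 1 + k - 1) / k = 3 := by
    rw [show 2 * k + 1 + k - 1 = 3 * k by omega, Nat.mul_div_cancel _ (by omega)]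
  rw [hV, hlow, hup]
  exact mem_Icc.mp (hcell i)

theorem ef1_of_card_cell_mem_Icc_of_exists_adj_mem_cell (G : SimpleGraph V) [DecidableRel G.Adj]
    (hcell : ∀ i, #(cell π i) ∈ Icc 2 3)
    (hfriend : ∀ a, ∃ b ∈ cell π (π a), G.Adj a b) (a b : V) :
    ∃ c ∈ (cell π (π b)).erase b,
      butil G a (((cell π (π b)).erase b).erase c) ≤ butil G a (cell π (π a)) := by
  have hb : b ∈ cell π (π b) := by simp [cell]
  obtain ⟨hlow, hup⟩ := mem_Icc.mp (hcell (π b))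
  obtain ⟨c, hc⟩ : ((cell π (π b)).erase b).Nonempty := by
    rw [← card_pos, card_erase_of_mem hb]
    omega
  obtain ⟨f, hf, hadj⟩ := hfriend a
  refine ⟨c, hc, ?_⟩
  calc butil G a (((cell π (π b)).erase b).erase c)
      ≤ #(((cell π (π b)).erase b).erase c) := card_filter_le _ _
    _ ≤ 1 := by rw [card_erase_of_mem hc, card_erase_of_mem hb]; omega
    _ ≤ butil G a (cell π (π a)) := card_pos.mpr ⟨f, mem_filter.mpr ⟨hf, hadj⟩⟩

end PartsOfTwoOrThree

section GuardPartition

variable {k : ℕ}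

def guardOf (i : Fin k) : Fin (2 * k + 1) := ⟨i.val, by omega⟩

def standardOf (i : Fin k) : Fin (2 * k + 1) := ⟨k + i.val, by omega⟩

theorem guardOf_ne_standardOf (i : Fin k) : guardOf i ≠ standardOf i := by
  simp only [guardOf, standardOf, ne_eq, Fin.ext_iff]
  omega

variable (hk : 0 < k)

theorem guardPartition_val (v : Fin (2 * k + 1)) :
    (guardPartition k hk v : ℕ) =
      if (v : ℕ) < k then (v : ℕ) else if (v : ℕ) < 2 * k then (v : ℕ) - k else 0 := by
  unfold guardPartition
  split_ifs <;> rfl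

theorem mem_cell_guardPartition {v : Fin (2 * k + 1)} {i : Fin k} :
    v ∈ cell (guardPartition k hk) i ↔ (guardPartition k hk v : ℕ) = i := by
  simp [cell, Fin.ext_iff]

theorem pair_subset_cell_guardPartition (i : Fin k) :
    {guardOf i, standardOf i} ⊆ cell (guardPartition k hk) i := by
  intro v hv
  rw [mem_cell_guardPartition, guardPartition_val]
  simp only [mem_insert, mem_singleton] at hv
  rcases hv with rfl | rfl
  · simp [guardOf]
  · simp [standardOf, two_mul]

theorem cell_guardPartition_subset (i : Fin k) :
    cell (guardPartition k hk) i ⊆ {guardOf i, standardOf i, ⟨2 * k, by omega⟩} := by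
  intro v hv
  rw [mem_cell_guardPartition, guardPartition_val] at hv
  simp only [mem_insert, mem_singleton, Fin.ext_iff, guardOf, standardOf]
  split_ifs at hv <;> omega

theorem card_cell_guardPartition_mem_Icc (i : Fin k) :
    #(cell (guardPartition k hk) i) ∈ Icc 2 3 := by
  refine mem_Icc.mpr ⟨?_, ?_⟩
  · calc 2 = #{guardOf i, standardOf i} := (card_pair (guardOf_ne_standardOf i)).symm
      _ ≤ _ := card_le_card (pair_subset_cell_guardPartition hk i)
  · exact (card_le_card (cell_guardPartition_subset hk i)).trans card_le_three

theorem exists_adj_mem_cell_guardPartition (a : Fin (2 * k + 1)) :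
    ∃ b ∈ cell (guardPartition k hk) (guardPartition k hk a), (guardGraph k).Adj a b := by
  set i := guardPartition k hk a
  have hpair := pair_subset_cell_guardPartition hk i
  by_cases ha : a = guardOf i
  · refine ⟨standardOf i, hpair (by simp), ha ▸ guardOf_ne_standardOf i, ?_⟩
    exact Or.inl (ha ▸ i.isLt)
  · exact ⟨guardOf i, hpair (by simp), ha, Or.inr i.isLt⟩

end GuardPartition

/-- In the guards/standards instance, the balanced `k`-partition putting exactly one
guard in each part (`π_j = {a_j, i_j}` for `j ≥ 2` and `π₁ = {a₁, i₁, i_{k+1}}`)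
is EF1. -/
theorem stmt14 (k : ℕ) (hk : 2 ≤ k) :
    IsBalanced (guardPartition k (by omega)) ∧
      ∀ a b : Fin (2 * k + 1),
        ∃ c ∈ (cell (guardPartition k (by omega)) (guardPartition k (by omega) b)).erase b,
          butil (guardGraph k) a
              (((cell (guardPartition k (by omega))
                  (guardPartition k (by omega) b)).erase b).erase c) ≤
            butil (guardGraph k) a
              (cell (guardPartition k (by omega)) (guardPartition k (by omega) a)) := by
  have hcell := card_cell_guardPartition_mem_Icc (by omega : 0 < k)
  exact ⟨isBalanced_of_card_cell_mem_Icc _ hk (Fintype.card_fin _) hcell,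
    ef1_of_card_cell_mem_Icc_of_exists_adj_mem_cell _ _ hcell
      (exists_adj_mem_cell_guardPartition _)⟩
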